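/- arXiv:2203.05291 — 5 statements merged into one kernel-verified Lean document; each statement's English description precedes it below -/
import Mathlib

section
/- Let Y ⊆ ℝ^m be a convex set, D ⊆ ℝ^m a nonempty set, U ⊆ ℝ^n a set, and θ_i = [G_i w_i] with G_i ∈ ℝ^{m×n}, w_i ∈ ℝ^m for i = 1,…,N. Define the tightened set X = {u ∈ U | G_i u + w_i ∈ Y ⊖ D for all i = 1,…,N}. If [G w] lies in the convex hull of {θ_1,…,θ_N}, then every u ∈ X satisfies u ∈ U and G u + w + d ∈ Y for all d ∈ D. -/
/-!
`Y ⊖ D` is convex whenever `Y` is, being `Y` intersected with the translates `Y - d`; and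
`G u + w` is the convex combination, with the same weights, of the vertex values `Gᵢ u + wᵢ`,
all of which lie in `Y ⊖ D`.
-/

open Matrix Finset

/-- Weighted inner product ⟨x,y⟩_W = xᵀWy. -/
noncomputable def wip {n : ℕ} (W : Matrix (Fin n) (Fin n) ℝ) (x y : Fin n → ℝ) : ℝ :=
  x ⬝ᵥ W.mulVec y

/-- Weighted norm ‖x‖_W = √(xᵀWx). -/
noncomputable def wnorm {n : ℕ} (W : Matrix (Fin n) (Fin n) ℝ) (x : Fin n → ℝ) : ℝ :=
  Real.sqrt (x ⬝ᵥ W.mulVec x)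

/-- Euclidean norm ‖x‖ = √(xᵀx). -/
noncomputable def enorm' {n : ℕ} (x : Fin n → ℝ) : ℝ := Real.sqrt (x ⬝ᵥ x)

/-- Operator 2-norm of a matrix. -/
noncomputable def opNorm {m n : ℕ} (A : Matrix (Fin m) (Fin n) ℝ) : ℝ :=
  ‖LinearMap.toContinuousLinearMap (Matrix.toEuclideanLin A)‖

def pontryaginDiff {E : Type*} [Add E] (Y D : Set E) : Set E :=
  {y ∈ Y | ∀ d ∈ D, y + d ∈ Y}

theorem pontryaginDiff_eq_inter_iInter {E : Type*} [Add E] (Y D : Set E) :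
    pontryaginDiff Y D = Y ∩ ⋂ d ∈ D, (· + d) ⁻¹' Y := by
  ext y
  simp [pontryaginDiff]

theorem Convex.pontryaginDiff {𝕜 E : Type*} [Semiring 𝕜] [PartialOrder 𝕜] [AddCommMonoid E]
    [Module 𝕜 E] {Y : Set E} (hY : Convex 𝕜 Y) (D : Set E) :
    Convex 𝕜 (pontryaginDiff Y D) := by
  rw [pontryaginDiff_eq_inter_iInter]
  exact hY.inter (convex_iInter₂ fun d _ => hY.translate_preimage_left d)

theorem Matrix.sum_smul_mulVec_add_sum_smul {ι R : Type*} {m n : Type*} [Fintype n]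
    [CommSemiring R] (s : Finset ι) (c : ι → R) (G : ι → Matrix m n R) (w : ι → m → R)
    (u : n → R) :
    (∑ i ∈ s, c i • G i) *ᵥ u + ∑ i ∈ s, c i • w i = ∑ i ∈ s, c i • (G i *ᵥ u + w i) := by
  simp only [Matrix.sum_mulVec, Matrix.smul_mulVec, smul_add, Finset.sum_add_distrib]

theorem constraint_tightening_general {m n N : ℕ}
    (Y : Set (Fin m → ℝ)) (hYconv : Convex ℝ Y)
    (D : Set (Fin m → ℝ))
    (U : Set (Fin n → ℝ))
    (G : Fin N → Matrix (Fin m) (Fin n) ℝ) (w : Fin N → Fin m → ℝ)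
    (G₀ : Matrix (Fin m) (Fin n) ℝ) (w₀ : Fin m → ℝ)
    (lam : Fin N → ℝ) (hlam : ∀ i, 0 ≤ lam i) (hsum : ∑ i, lam i = 1)
    (hG : G₀ = ∑ i, lam i • G i) (hw : w₀ = ∑ i, lam i • w i)
    (u : Fin n → ℝ)
    (hu : u ∈ {u ∈ U | ∀ i, (G i).mulVec u + w i ∈ {y ∈ Y | ∀ d ∈ D, y + d ∈ Y}}) :
    u ∈ U ∧ ∀ d ∈ D, G₀.mulVec u + w₀ + d ∈ Y := by
  obtain ⟨hU, hvertices⟩ := hu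
  have hcombo : G₀ *ᵥ u + w₀ ∈ pontryaginDiff Y D := by
    rw [hG, hw, Matrix.sum_smul_mulVec_add_sum_smul]
    exact (hYconv.pontryaginDiff D).sum_mem (fun i _ => hlam i) hsum fun i _ => hvertices i
  exact ⟨hU, hcombo.2⟩

/-- Lemma 1, constraint tightening: if [G w] lies in the convex hull of the
vertices [Gᵢ wᵢ], then membership in the tightened set
X = {u ∈ U | Gᵢu + wᵢ ∈ Y ⊖ D ∀i} implies u ∈ U and Gu + w + d ∈ Y for all d ∈ D,
where Y ⊖ D = {y ∈ Y | y + d ∈ Y ∀ d ∈ D}. -/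
theorem constraint_tightening {m n N : ℕ}
    (Y : Set (Fin m → ℝ)) (hYconv : Convex ℝ Y)
    (D : Set (Fin m → ℝ)) (hD : D.Nonempty)
    (U : Set (Fin n → ℝ))
    (G : Fin N → Matrix (Fin m) (Fin n) ℝ) (w : Fin N → Fin m → ℝ)
    (G₀ : Matrix (Fin m) (Fin n) ℝ) (w₀ : Fin m → ℝ)
    (lam : Fin N → ℝ) (hlam : ∀ i, 0 ≤ lam i) (hsum : ∑ i, lam i = 1)
    (hG : G₀ = ∑ i, lam i • G i) (hw : w₀ = ∑ i, lam i • w i)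
    (u : Fin n → ℝ)
    (hu : u ∈ {u ∈ U | ∀ i, (G i).mulVec u + w i ∈ {y ∈ Y | ∀ d ∈ D, y + d ∈ Y}}) :
    u ∈ U ∧ ∀ d ∈ D, G₀.mulVec u + w₀ + d ∈ Y :=
  constraint_tightening_general Y hYconv D U G w G₀ w₀ lam hlam hsum hG hw u hu
end

section
/- Let 0 < μ ≤ μ̃ ≤ L̃ ≤ L be real numbers and let α ∈ (0, 2μ/L²). Define ε = 1 − αL̃²/μ̃ and η = √(1 − 2αμ̃ + α²L̃²). Then ε ∈ (−1, 1), η² = 1 − (μ̃/L̃)²(1 − ε²), and 0 ≤ η < 1. -/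
open Matrix Finset

/-- for 0 < μ ≤ μ̃ ≤ L̃ ≤ L and α ∈ (0, 2μ/L²), with ε = 1 − αL̃²/μ̃ and
η = √(1 − 2αμ̃ + α²L̃²), we have ε ∈ (−1,1), η² = 1 − (μ̃/L̃)²(1 − ε²), and 0 ≤ η < 1. -/
theorem step_size_rate (μ μt Lt L α : ℝ)
    (hμ : 0 < μ) (h1 : μ ≤ μt) (h2 : μt ≤ Lt) (h3 : Lt ≤ L)
    (hα : α ∈ Set.Ioo 0 (2 * μ / L ^ 2)) :
    (1 - α * Lt ^ 2 / μt) ∈ Set.Ioo (-1 : ℝ) 1 ∧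
    (Real.sqrt (1 - 2 * α * μt + α ^ 2 * Lt ^ 2)) ^ 2
      = 1 - (μt / Lt) ^ 2 * (1 - (1 - α * Lt ^ 2 / μt) ^ 2) ∧
    0 ≤ Real.sqrt (1 - 2 * α * μt + α ^ 2 * Lt ^ 2) ∧
    Real.sqrt (1 - 2 * α * μt + α ^ 2 * Lt ^ 2) < 1 := by
  obtain ⟨hα0, hα2⟩ := hα
  have hμt : (0:ℝ) < μt := lt_of_lt_of_le hμ h1
  have hLt : (0:ℝ) < Lt := lt_of_lt_of_le hμt h2
  have hL : (0:ℝ) < L := lt_of_lt_of_le hLt h3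
  -- key: α * Lt^2 < 2 * μt
  have hkey : α * Lt ^ 2 < 2 * μt := by
    have h4 : α * L ^ 2 < 2 * μ := (lt_div_iff₀ (by positivity : (0:ℝ) < L ^ 2)).mp hα2
    have hLt2 : Lt ^ 2 ≤ L ^ 2 := by nlinarith
    nlinarith
  have hnonneg : 0 ≤ 1 - 2 * α * μt + α ^ 2 * Lt ^ 2 := by
    nlinarith [sq_nonneg (1 - α * μt),
      mul_nonneg (sq_nonneg α) (show (0:ℝ) ≤ Lt ^ 2 - μt ^ 2 by nlinarith)]
  have hsq : (Real.sqrt (1 - 2 * α * μt + α ^ 2 * Lt ^ 2)) ^ 2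
      = 1 - 2 * α * μt + α ^ 2 * Lt ^ 2 := Real.sq_sqrt hnonneg
  refine ⟨⟨?_, ?_⟩, ?_, Real.sqrt_nonneg _, ?_⟩
  · have : α * Lt ^ 2 / μt < 2 := (div_lt_iff₀ hμt).mpr (by linarith)
    linarith
  · have : 0 < α * Lt ^ 2 / μt := by positivity
    linarith
  · rw [hsq]
    field_simp
    ring
  · have h1' : 1 - 2 * α * μt + α ^ 2 * Lt ^ 2 < 1 := by nlinarith
    calc Real.sqrt (1 - 2 * α * μt + α ^ 2 * Lt ^ 2) < Real.sqrt 1 :=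
          Real.sqrt_lt_sqrt hnonneg h1'
      _ = 1 := Real.sqrt_one
end

section
/- Let W ∈ ℝ^{n×n} be symmetric positive definite, X ⊆ ℝ^n a nonempty closed convex set, H̃ ∈ ℝ^{n×n}, f̃ ∈ ℝ^n, F̃(u) = H̃u + f̃, M ∈ ℝ^{m×n}, Q ∈ ℝ^{m×m}, and suppose μ̃ > 0 and L̃ > 0 satisfy μ̃‖d‖_W² ≤ dᵀH̃d and ‖W^{-1}H̃d‖_W ≤ L̃‖d‖_W for all d ∈ ℝ^n, and α ∈ (0, 2μ̃/L̃²). Let ū ∈ X satisfy ⟨F̃(ū), v − ū⟩ ≥ 0 for all v ∈ X, let d_k ∈ ℝ^m, and let u_{k+1} be the W-weighted projection onto X of u_k − αW^{-1}(F̃(u_k) + MᵀQ d_k). Then ‖u_{k+1} − ū‖_W ≤ η‖u_k − ū‖_W + α‖W^{-1/2}MᵀQ‖ ‖d_k‖, where η = √(1 − 2αμ̃ + α²L̃²) and ‖W^{-1/2}MᵀQ‖ is the operator 2-norm. -/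
/-!
Transport everything along `x ↦ S x`, where `S * S = W`: the `W`-geometry becomes Euclidean
geometry. A `W`-projection onto `X` is then characterized by a variational inequality, which makes
it nonexpansive, and the variational inequality for `ū` says exactly that `ū` is the projection of
`ū - α W⁻¹ F̃(ū)`. Hence `‖u_{k+1} - ū‖_W` is at most the `W`-distance between the two
pre-projection points. Their difference is a gradient step `e - α W⁻¹ H̃ e` on `e = u_k - ū`, whose
norm strong monotonicity and the Lipschitz bound control by `η ‖e‖_W`, plus the disturbance
`α S⁻¹ Mᵀ Q d_k`.
-/

open Matrix Finset

open scoped RealInnerProductSpace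

section InnerProductSpace

variable {E : Type*} [NormedAddCommGroup E] [InnerProductSpace ℝ E]

theorem real_inner_map_sub_le_zero_of_forall_norm_map_sub_le {F : Type*} [AddCommGroup F]
    [Module ℝ F] (T : F →ₗ[ℝ] E) {K : Set F} (hK : Convex ℝ K) {u y : F} (hy : y ∈ K)
    (hmin : ∀ w ∈ K, ‖T (y - u)‖ ≤ ‖T (w - u)‖) (w : F) (hw : w ∈ K) :
    ⟪T (u - y), T (w - y)⟫ ≤ 0 := by
  have : Nonempty (T '' K) := ⟨⟨T y, y, hy, rfl⟩⟩
  have hdist : ‖T u - T y‖ = ⨅ v : T '' K, ‖T u - v‖ := by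
    refine le_antisymm (le_ciInf ?_) (ciInf_le (f := fun v : T '' K => ‖T u - v‖)
      ⟨0, Set.forall_mem_range.2 fun _ => norm_nonneg _⟩ ⟨T y, y, hy, rfl⟩)
    rintro ⟨_, v, hv, rfl⟩
    simpa only [norm_sub_rev (T u), map_sub] using hmin v hv
  simpa only [map_sub] using
    (norm_eq_iInf_iff_real_inner_le_zero (hK.linear_image T) (Set.mem_image_of_mem T hy)).1 hdist
      _ (Set.mem_image_of_mem T hw)

theorem norm_sub_le_of_real_inner_le_zero {y₁ y₂ z₁ z₂ : E} (h₁ : ⟪z₁ - y₁, y₂ - y₁⟫ ≤ 0)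
    (h₂ : ⟪z₂ - y₂, y₁ - y₂⟫ ≤ 0) : ‖y₁ - y₂‖ ≤ ‖z₁ - z₂‖ := by
  have hsq : ‖y₁ - y₂‖ ^ 2 ≤ ⟪z₁ - z₂, y₁ - y₂⟫ := by
    have : ⟪z₁ - z₂, y₁ - y₂⟫ - ‖y₁ - y₂‖ ^ 2 = -⟪z₁ - y₁, y₂ - y₁⟫ - ⟪z₂ - y₂, y₁ - y₂⟫ := by
      rw [← real_inner_self_eq_norm_sq]
      simp only [inner_sub_left, inner_sub_right, real_inner_comm]
      ring
    linarith
  nlinarith [real_inner_le_norm (z₁ - z₂) (y₁ - y₂), norm_nonneg (y₁ - y₂), norm_nonneg (z₁ - z₂)]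

theorem norm_sub_smul_le_sqrt_mul_norm {a b : E} {μ L α : ℝ} (hα : 0 ≤ α)
    (hmono : μ * ‖a‖ ^ 2 ≤ ⟪a, b⟫) (hlip : ‖b‖ ≤ L * ‖a‖) :
    ‖a - α • b‖ ≤ √(1 - 2 * α * μ + α ^ 2 * L ^ 2) * ‖a‖ := by
  have hb : ‖b‖ ^ 2 ≤ L ^ 2 * ‖a‖ ^ 2 := by
    rw [← mul_pow]
    exact pow_le_pow_left₀ (norm_nonneg b) hlip 2
  have hsq : ‖a - α • b‖ ^ 2 ≤ (1 - 2 * α * μ + α ^ 2 * L ^ 2) * ‖a‖ ^ 2 := by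
    rw [norm_sub_sq_real, norm_smul, inner_smul_right, mul_pow, Real.norm_eq_abs, sq_abs]
    nlinarith [mul_le_mul_of_nonneg_left hmono hα, mul_le_mul_of_nonneg_left hb (sq_nonneg α)]
  calc ‖a - α • b‖ = √(‖a - α • b‖ ^ 2) := (Real.sqrt_sq (norm_nonneg _)).symm
    _ ≤ √((1 - 2 * α * μ + α ^ 2 * L ^ 2) * ‖a‖ ^ 2) := Real.sqrt_le_sqrt hsq
    _ = √(1 - 2 * α * μ + α ^ 2 * L ^ 2) * ‖a‖ := by
      rw [Real.sqrt_mul' _ (sq_nonneg _), Real.sqrt_sq (norm_nonneg _)]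

end InnerProductSpace

section Matrix

variable {m n : ℕ}

def euclideanMulVec (A : Matrix (Fin m) (Fin n) ℝ) : (Fin n → ℝ) →ₗ[ℝ] EuclideanSpace ℝ (Fin m) :=
  (WithLp.linearEquiv 2 ℝ (Fin m → ℝ)).symm.toLinearMap ∘ₗ A.mulVecLin

@[simp]
theorem euclideanMulVec_apply (A : Matrix (Fin m) (Fin n) ℝ) (x : Fin n → ℝ) :
    euclideanMulVec A x = WithLp.toLp 2 (A *ᵥ x) := rfl

theorem enorm'_eq_norm_toLp (x : Fin n → ℝ) : enorm' x = ‖WithLp.toLp 2 x‖ := by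
  rw [norm_eq_sqrt_real_inner, EuclideanSpace.inner_toLp_toLp, star_trivial, enorm']

theorem norm_euclideanMulVec_le (A : Matrix (Fin m) (Fin n) ℝ) (x : Fin n → ℝ) :
    ‖euclideanMulVec A x‖ ≤ opNorm A * enorm' x := by
  rw [enorm'_eq_norm_toLp]
  exact (LinearMap.toContinuousLinearMap (toEuclideanLin A)).le_opNorm (WithLp.toLp 2 x)

theorem inner_euclideanMulVec_self_mul {S : Matrix (Fin n) (Fin n) ℝ} (hS : Sᵀ = S)
    (x y : Fin n → ℝ) : ⟪euclideanMulVec S x, euclideanMulVec S y⟫ = x ⬝ᵥ (S * S) *ᵥ y := by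
  rw [euclideanMulVec_apply, euclideanMulVec_apply, EuclideanSpace.inner_toLp_toLp, star_trivial,
    ← mulVec_mulVec, dotProduct_mulVec, ← mulVec_transpose, hS, dotProduct_comm]

theorem wnorm_mul_self_eq_norm_euclideanMulVec {S : Matrix (Fin n) (Fin n) ℝ} (hS : Sᵀ = S)
    (x : Fin n → ℝ) : wnorm (S * S) x = ‖euclideanMulVec S x‖ := by
  rw [norm_eq_sqrt_real_inner, inner_euclideanMulVec_self_mul hS, wnorm]

theorem euclideanMulVec_mul_self_inv_mulVec {S : Matrix (Fin n) (Fin n) ℝ} (hS : IsUnit S.det)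
    (g : Fin n → ℝ) : euclideanMulVec S ((S * S)⁻¹ *ᵥ g) = WithLp.toLp 2 (S⁻¹ *ᵥ g) := by
  rw [euclideanMulVec_apply, mulVec_mulVec, Matrix.mul_inv_rev, ← Matrix.mul_assoc,
    mul_nonsing_inv S hS, Matrix.one_mul]

theorem inner_euclideanMulVec_mul_self_inv_mulVec {S : Matrix (Fin n) (Fin n) ℝ} (hS : Sᵀ = S)
    (hdet : IsUnit S.det) (g v : Fin n → ℝ) :
    ⟪euclideanMulVec S ((S * S)⁻¹ *ᵥ g), euclideanMulVec S v⟫ = g ⬝ᵥ v := by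
  rw [inner_euclideanMulVec_self_mul hS, dotProduct_mulVec, ← mulVec_transpose,
    transpose_mul, hS, mulVec_mulVec, mul_nonsing_inv _ (by simpa using hdet.mul hdet),
    one_mulVec]

theorem real_inner_euclideanMulVec_le_zero_of_dotProduct_nonneg {S : Matrix (Fin n) (Fin n) ℝ}
    (hS : Sᵀ = S) (hdet : IsUnit S.det) {α : ℝ} (hα : 0 ≤ α) {g u v : Fin n → ℝ}
    (h : 0 ≤ g ⬝ᵥ (v - u)) :
    ⟪euclideanMulVec S ((u - α • (S * S)⁻¹ *ᵥ g) - u), euclideanMulVec S (v - u)⟫ ≤ 0 := by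
  rw [sub_sub_cancel_left, ← neg_smul, map_smul, inner_smul_left,
    inner_euclideanMulVec_mul_self_inv_mulVec hS hdet]
  simpa using mul_nonneg hα h

end Matrix

theorem one_step_iss_general {n m : ℕ}
    (W : Matrix (Fin n) (Fin n) ℝ)
    (S : Matrix (Fin n) (Fin n) ℝ) (hS : S.PosDef) (hSsq : S * S = W)
    (X : Set (Fin n → ℝ)) (hXconv : Convex ℝ X)
    (Ht : Matrix (Fin n) (Fin n) ℝ) (ft : Fin n → ℝ)
    (M : Matrix (Fin m) (Fin n) ℝ) (Q : Matrix (Fin m) (Fin m) ℝ)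
    (μt Lt : ℝ)
    (hmono : ∀ d : Fin n → ℝ, μt * (wnorm W d) ^ 2 ≤ d ⬝ᵥ Ht.mulVec d)
    (hlip : ∀ d : Fin n → ℝ, wnorm W (W⁻¹.mulVec (Ht.mulVec d)) ≤ Lt * wnorm W d)
    (α : ℝ) (hα : α ∈ Set.Ioo 0 (2 * μt / Lt ^ 2))
    (ubar : Fin n → ℝ) (hubar : ubar ∈ X)
    (hVI : ∀ v ∈ X, 0 ≤ (Ht.mulVec ubar + ft) ⬝ᵥ (v - ubar))
    (dk : Fin m → ℝ) (uk uk1 : Fin n → ℝ) (huk1 : uk1 ∈ X)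
    (hproj : ∀ v ∈ X,
      wnorm W (uk1 - (uk - α • W⁻¹.mulVec ((Ht.mulVec uk + ft) + (Mᵀ * Q).mulVec dk)))
        ≤ wnorm W (v - (uk - α • W⁻¹.mulVec ((Ht.mulVec uk + ft) + (Mᵀ * Q).mulVec dk)))) :
    wnorm W (uk1 - ubar)
      ≤ Real.sqrt (1 - 2 * α * μt + α ^ 2 * Lt ^ 2) * wnorm W (uk - ubar)
        + α * opNorm (S⁻¹ * (Mᵀ * Q)) * enorm' dk := by
  subst hSsq
  have hSt : Sᵀ = S := hS.isHermitian
  have hdet : IsUnit S.det := isUnit_iff_ne_zero.mpr hS.det_pos.ne'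
  have hα0 : 0 ≤ α := hα.1.le
  simp only [wnorm_mul_self_eq_norm_euclideanMulVec hSt] at hmono hlip hproj ⊢
  set T := euclideanMulVec S
  set e := uk - ubar
  set z := uk - α • (S * S)⁻¹ *ᵥ ((Ht *ᵥ uk + ft) + (Mᵀ * Q) *ᵥ dk)
  set zbar := ubar - α • (S * S)⁻¹ *ᵥ (Ht *ᵥ ubar + ft)
  have hz : ⟪T (z - uk1), T (ubar - uk1)⟫ ≤ 0 :=
    real_inner_map_sub_le_zero_of_forall_norm_map_sub_le T hXconv huk1 hproj ubar hubar
  have hzbar : ⟪T (zbar - ubar), T (uk1 - ubar)⟫ ≤ 0 :=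
    real_inner_euclideanMulVec_le_zero_of_dotProduct_nonneg hSt hdet hα0 (hVI uk1 huk1)
  have hsplit : T z - T zbar = (T e - α • T ((S * S)⁻¹ *ᵥ (Ht *ᵥ e)))
      - α • WithLp.toLp 2 (S⁻¹ *ᵥ ((Mᵀ * Q) *ᵥ dk)) := by
    rw [← euclideanMulVec_mul_self_inv_mulVec hdet, ← map_smul, ← map_smul, ← map_sub, ← map_sub,
      ← map_sub]
    congr 1
    simp only [z, zbar, e, mulVec_add, mulVec_sub]
    module
  have hmono' : μt * ‖T e‖ ^ 2 ≤ ⟪T e, T ((S * S)⁻¹ *ᵥ (Ht *ᵥ e))⟫ := by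
    rw [real_inner_comm, inner_euclideanMulVec_mul_self_inv_mulVec hSt hdet, dotProduct_comm]
    exact hmono e
  have hnoise : ‖α • WithLp.toLp 2 (S⁻¹ *ᵥ ((Mᵀ * Q) *ᵥ dk))‖
      ≤ α * opNorm (S⁻¹ * (Mᵀ * Q)) * enorm' dk := by
    rw [norm_smul, Real.norm_of_nonneg hα0, mulVec_mulVec, ← euclideanMulVec_apply, mul_assoc]
    exact mul_le_mul_of_nonneg_left (norm_euclideanMulVec_le _ dk) hα0
  simp only [map_sub] at hz hzbar ⊢
  calc ‖T uk1 - T ubar‖ ≤ ‖T z - T zbar‖ := norm_sub_le_of_real_inner_le_zero hz hzbar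
    _ ≤ _ := hsplit ▸ norm_sub_le _ _
    _ ≤ _ := add_le_add (norm_sub_smul_le_sqrt_mul_norm hα0 hmono' (hlip e)) hnoise

/-- one step of the noisy forward-backward splitting iteration contracts
towards the fixed point ū up to a disturbance term:
‖u_{k+1} − ū‖_W ≤ η‖u_k − ū‖_W + α‖W^{-1/2}MᵀQ‖‖d_k‖ with η = √(1 − 2αμ̃ + α²L̃²).
Here S is the unique symmetric positive definite square root of W, so W^{-1/2} = S⁻¹. -/
theorem one_step_iss {n m : ℕ}
    (W : Matrix (Fin n) (Fin n) ℝ) (hW : W.PosDef)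
    (S : Matrix (Fin n) (Fin n) ℝ) (hS : S.PosDef) (hSsq : S * S = W)
    (X : Set (Fin n → ℝ)) (hXne : X.Nonempty) (hXcl : IsClosed X) (hXconv : Convex ℝ X)
    (Ht : Matrix (Fin n) (Fin n) ℝ) (ft : Fin n → ℝ)
    (M : Matrix (Fin m) (Fin n) ℝ) (Q : Matrix (Fin m) (Fin m) ℝ)
    (μt Lt : ℝ) (hμ : 0 < μt) (hL : 0 < Lt)
    (hmono : ∀ d : Fin n → ℝ, μt * (wnorm W d) ^ 2 ≤ d ⬝ᵥ Ht.mulVec d)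
    (hlip : ∀ d : Fin n → ℝ, wnorm W (W⁻¹.mulVec (Ht.mulVec d)) ≤ Lt * wnorm W d)
    (α : ℝ) (hα : α ∈ Set.Ioo 0 (2 * μt / Lt ^ 2))
    (ubar : Fin n → ℝ) (hubar : ubar ∈ X)
    (hVI : ∀ v ∈ X, 0 ≤ (Ht.mulVec ubar + ft) ⬝ᵥ (v - ubar))
    (dk : Fin m → ℝ) (uk uk1 : Fin n → ℝ) (huk1 : uk1 ∈ X)
    (hproj : ∀ v ∈ X,
      wnorm W (uk1 - (uk - α • W⁻¹.mulVec ((Ht.mulVec uk + ft) + (Mᵀ * Q).mulVec dk)))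
        ≤ wnorm W (v - (uk - α • W⁻¹.mulVec ((Ht.mulVec uk + ft) + (Mᵀ * Q).mulVec dk)))) :
    wnorm W (uk1 - ubar)
      ≤ Real.sqrt (1 - 2 * α * μt + α ^ 2 * Lt ^ 2) * wnorm W (uk - ubar)
        + α * opNorm (S⁻¹ * (Mᵀ * Q)) * enorm' dk :=
  one_step_iss_general W S hS hSsq X hXconv Ht ft M Q μt Lt hmono hlip α hα ubar hubar hVI dk uk uk1
    huk1 hproj
end

section
/- Let W ∈ ℝ^{n×n} be symmetric positive definite, X ⊆ ℝ^n a nonempty closed convex set, H̃ ∈ ℝ^{n×n} with dᵀH̃d ≥ μ̃‖d‖_W² for all d ∈ ℝ^n for some μ̃ > 0, and b_1, b_2 ∈ ℝ^n. If x_1, x_2 ∈ X satisfy the variational inequalities ⟨H̃x_1 + b_1, v − x_1⟩ ≥ 0 for all v ∈ X and ⟨H̃x_2 + b_2, v − x_2⟩ ≥ 0 for all v ∈ X, then ‖x_1 − x_2‖_W ≤ (1/μ̃)‖W^{-1/2}(b_1 − b_2)‖. -/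
open Matrix Finset

private lemma cs_dot {n : ℕ} (u v : Fin n → ℝ) :
    u ⬝ᵥ v ≤ Real.sqrt (u ⬝ᵥ u) * Real.sqrt (v ⬝ᵥ v) := by
  have hu : 0 ≤ u ⬝ᵥ u := by
    simpa [dotProduct] using Finset.sum_nonneg fun i _ => mul_self_nonneg (u i)
  have h2 : (u ⬝ᵥ v)^2 ≤ (u ⬝ᵥ u) * (v ⬝ᵥ v) := by
    simpa [dotProduct, pow_two, mul_pow] using Finset.sum_mul_sq_le_sq_mul_sq univ u v
  calc u ⬝ᵥ v ≤ |u ⬝ᵥ v| := le_abs_self _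
    _ = Real.sqrt ((u ⬝ᵥ v)^2) := (Real.sqrt_sq_eq_abs _).symm
    _ ≤ Real.sqrt ((u ⬝ᵥ u) * (v ⬝ᵥ v)) := Real.sqrt_le_sqrt h2
    _ = Real.sqrt (u ⬝ᵥ u) * Real.sqrt (v ⬝ᵥ v) := Real.sqrt_mul hu _

/-- solutions of strongly monotone affine variational inequalities are
Lipschitz with respect to the affine offset: if ⟨H̃xⱼ + bⱼ, v − xⱼ⟩ ≥ 0 ∀ v ∈ X for
j = 1,2, then ‖x₁ − x₂‖_W ≤ (1/μ̃)‖W^{-1/2}(b₁ − b₂)‖.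
S is the symmetric positive definite square root of W. -/
theorem vi_solution_lipschitz {n : ℕ}
    (W : Matrix (Fin n) (Fin n) ℝ) (hW : W.PosDef)
    (S : Matrix (Fin n) (Fin n) ℝ) (hS : S.PosDef) (hSsq : S * S = W)
    (X : Set (Fin n → ℝ)) (hXne : X.Nonempty) (hXcl : IsClosed X) (hXconv : Convex ℝ X)
    (Ht : Matrix (Fin n) (Fin n) ℝ) (μt : ℝ) (hμ : 0 < μt)
    (hmono : ∀ d : Fin n → ℝ, μt * (wnorm W d) ^ 2 ≤ d ⬝ᵥ Ht.mulVec d)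
    (b₁ b₂ : Fin n → ℝ) (x₁ x₂ : Fin n → ℝ) (hx₁ : x₁ ∈ X) (hx₂ : x₂ ∈ X)
    (hVI₁ : ∀ v ∈ X, 0 ≤ (Ht.mulVec x₁ + b₁) ⬝ᵥ (v - x₁))
    (hVI₂ : ∀ v ∈ X, 0 ≤ (Ht.mulVec x₂ + b₂) ⬝ᵥ (v - x₂)) :
    wnorm W (x₁ - x₂) ≤ (1 / μt) * enorm' (S⁻¹.mulVec (b₁ - b₂)) := by
  set d : Fin n → ℝ := x₁ - x₂ with hd
  set u : Fin n → ℝ := S⁻¹.mulVec (b₁ - b₂) with hu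
  have hNdef : wnorm W d = Real.sqrt (d ⬝ᵥ W.mulVec d) := rfl
  have hEdef : enorm' u = Real.sqrt (u ⬝ᵥ u) := rfl
  set N : ℝ := wnorm W d with hN
  set E : ℝ := enorm' u with hE
  have hNnonneg : 0 ≤ N := by rw [hNdef]; exact Real.sqrt_nonneg _
  have hEnonneg : 0 ≤ E := by rw [hEdef]; exact Real.sqrt_nonneg _
  have hSym : Sᵀ = S := hS.isHermitian.eq
  have hSinv : S * S⁻¹ = 1 :=
    Matrix.mul_nonsing_inv S (Matrix.isUnit_iff_isUnit_det S |>.mp hS.isUnit)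
  have hSu : S.mulVec u = b₁ - b₂ := by
    rw [hu, Matrix.mulVec_mulVec, hSinv, Matrix.one_mulVec]
  have hsymdot : ∀ a c : Fin n → ℝ, (S.mulVec a) ⬝ᵥ c = a ⬝ᵥ S.mulVec c := by
    intro a c
    rw [Matrix.dotProduct_mulVec, ← Matrix.mulVec_transpose, hSym]
  have h1 := hVI₁ x₂ hx₂
  have h2 := hVI₂ x₁ hx₁
  have hstep : d ⬝ᵥ Ht.mulVec d ≤ -((b₁ - b₂) ⬝ᵥ d) := by
    have e1 : (Ht.mulVec x₁ + b₁) ⬝ᵥ (x₂ - x₁) = -(d ⬝ᵥ Ht.mulVec x₁) - b₁ ⬝ᵥ d := by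
      simp [hd, dotProduct_sub, add_dotProduct, sub_dotProduct, dotProduct_comm]
      ring
    have e2 : (Ht.mulVec x₂ + b₂) ⬝ᵥ (x₁ - x₂) = d ⬝ᵥ Ht.mulVec x₂ + b₂ ⬝ᵥ d := by
      simp [hd, dotProduct_sub, add_dotProduct, sub_dotProduct, dotProduct_comm]
      ring
    have e3 : d ⬝ᵥ Ht.mulVec d = d ⬝ᵥ Ht.mulVec x₁ - d ⬝ᵥ Ht.mulVec x₂ := by
      simp [hd, Matrix.mulVec_sub, dotProduct_sub]
    have e4 : (b₁ - b₂) ⬝ᵥ d = b₁ ⬝ᵥ d - b₂ ⬝ᵥ d := by simp [sub_dotProduct]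
    rw [e1] at h1; rw [e2] at h2
    linarith [h1, h2]
  have hSdSd : (S.mulVec d) ⬝ᵥ (S.mulVec d) = d ⬝ᵥ W.mulVec d := by
    rw [hsymdot, Matrix.mulVec_mulVec, hSsq]
  have hstep2 : -((b₁ - b₂) ⬝ᵥ d) ≤ E * N := by
    have heq : -((b₁ - b₂) ⬝ᵥ d) = (-u) ⬝ᵥ (S.mulVec d) := by
      rw [← hSu, hsymdot, neg_dotProduct]
    rw [heq]
    calc (-u) ⬝ᵥ (S.mulVec d)
        ≤ Real.sqrt ((-u) ⬝ᵥ (-u)) * Real.sqrt ((S.mulVec d) ⬝ᵥ (S.mulVec d)) := cs_dot _ _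
      _ = E * N := by
          rw [neg_dotProduct, dotProduct_neg, neg_neg, hSdSd, ← hEdef, ← hNdef]
  have hmain : μt * N ^ 2 ≤ E * N := le_trans (hmono d) (le_trans hstep hstep2)
  rcases eq_or_lt_of_le hNnonneg with h0 | hpos
  · rw [← h0]
    have : 0 ≤ 1 / μt := by positivity
    exact mul_nonneg this hEnonneg
  · have hμN : μt * N ≤ E := by
      have h := mul_le_mul_of_nonneg_right hmain (le_of_lt (inv_pos.mpr hpos))
      calc μt * N = μt * N ^ 2 * N⁻¹ := by field_simp
        _ ≤ E * N * N⁻¹ := h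
        _ = E := by field_simp
    rw [one_div]
    calc N = μt⁻¹ * (μt * N) := by field_simp
      _ ≤ μt⁻¹ * E := mul_le_mul_of_nonneg_left hμN (le_of_lt (inv_pos.mpr hμ))
end

section
/- Let G, M ∈ ℝ^{m×n}, Q ∈ ℝ^{m×m} symmetric positive semidefinite, R ∈ ℝ^{n×n} symmetric positive semidefinite, w, r ∈ ℝ^m, and define H = GᵀQG + R, f = GᵀQ(w − r), H̃ = MᵀQG + R, f̃ = MᵀQ(w − r). Let W ∈ ℝ^{n×n} be symmetric positive definite with dᵀH̃d ≥ μ̃‖d‖_W² for all d ∈ ℝ^n for some μ̃ > 0, and let X ⊆ ℝ^n be a nonempty closed convex set. If ū ∈ X satisfies ⟨H̃ū + f̃, v − ū⟩ ≥ 0 for all v ∈ X and u* ∈ X satisfies ⟨Hu* + f, v − u*⟩ ≥ 0 for all v ∈ X, then ‖ū − u*‖_W ≤ (1/μ̃)‖W^{-1/2}(G − M)ᵀQ(Gu* + w − r)‖. -/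
open Matrix Finset

-- Cauchy–Schwarz for dotProduct
lemma dot_le (k : ℕ) (x y : Fin k → ℝ) : x ⬝ᵥ y ≤ enorm' x * enorm' y := by
  have h := Finset.sum_mul_sq_le_sq_mul_sq Finset.univ x y
  have hx : (0:ℝ) ≤ x ⬝ᵥ x := by
    simp [dotProduct]
    exact Finset.sum_nonneg fun i _ => mul_self_nonneg _
  have hy : (0:ℝ) ≤ y ⬝ᵥ y := by
    simp [dotProduct]
    exact Finset.sum_nonneg fun i _ => mul_self_nonneg _
  have hxx : (∑ i, x i ^ 2) = x ⬝ᵥ x := by simp [dotProduct, sq]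
  have hyy : (∑ i, y i ^ 2) = y ⬝ᵥ y := by simp [dotProduct, sq]
  calc x ⬝ᵥ y ≤ |x ⬝ᵥ y| := le_abs_self _
    _ = Real.sqrt ((x ⬝ᵥ y)^2) := (Real.sqrt_sq_eq_abs _).symm
    _ ≤ Real.sqrt ((x ⬝ᵥ x) * (y ⬝ᵥ y)) := by
        apply Real.sqrt_le_sqrt
        rw [← hxx, ← hyy]
        exact h
    _ = enorm' x * enorm' y := by rw [Real.sqrt_mul hx]; rfl


/-- Lemma 3: the distance between the fixed point ū (solving the VI with
H̃ = MᵀQG + R, f̃ = MᵀQ(w − r)) and the true optimizer u* (solving the VI with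
H = GᵀQG + R, f = GᵀQ(w − r)) satisfies
‖ū − u*‖_W ≤ (1/μ̃)‖W^{-1/2}(G − M)ᵀQ(Gu* + w − r)‖.
S is the symmetric positive definite square root of W. -/
theorem fixed_point_optimizer_distance {n m : ℕ}
    (G M : Matrix (Fin m) (Fin n) ℝ)
    (Q : Matrix (Fin m) (Fin m) ℝ) (hQ : Q.PosSemidef)
    (R : Matrix (Fin n) (Fin n) ℝ) (hR : R.PosSemidef)
    (w r : Fin m → ℝ)
    (W : Matrix (Fin n) (Fin n) ℝ) (hW : W.PosDef)
    (S : Matrix (Fin n) (Fin n) ℝ) (hS : S.PosDef) (hSsq : S * S = W)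
    (μt : ℝ) (hμ : 0 < μt)
    (hmono : ∀ d : Fin n → ℝ, μt * (wnorm W d) ^ 2 ≤ d ⬝ᵥ (Mᵀ * Q * G + R).mulVec d)
    (X : Set (Fin n → ℝ)) (hXne : X.Nonempty) (hXcl : IsClosed X) (hXconv : Convex ℝ X)
    (ubar ustar : Fin n → ℝ) (hubar : ubar ∈ X) (hustar : ustar ∈ X)
    (hVIbar : ∀ v ∈ X,
      0 ≤ ((Mᵀ * Q * G + R).mulVec ubar + (Mᵀ * Q).mulVec (w - r)) ⬝ᵥ (v - ubar))
    (hVIstar : ∀ v ∈ X,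
      0 ≤ ((Gᵀ * Q * G + R).mulVec ustar + (Gᵀ * Q).mulVec (w - r)) ⬝ᵥ (v - ustar)) :
    wnorm W (ubar - ustar)
      ≤ (1 / μt) * enorm' ((S⁻¹ * (G - M)ᵀ * Q).mulVec (G.mulVec ustar + w - r)) := by
  set d : Fin n → ℝ := ubar - ustar with hd
  set Ht := Mᵀ * Q * G + R with hHt
  set H := Gᵀ * Q * G + R with hH
  set z : Fin n → ℝ := ((G - M)ᵀ * Q).mulVec (G.mulVec ustar + w - r) with hz
  set y : Fin n → ℝ := (S⁻¹ * (G - M)ᵀ * Q).mulVec (G.mulVec ustar + w - r) with hy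
  have hSt : Sᵀ = S := hS.isHermitian
  have hSinv : S * S⁻¹ = 1 := Matrix.mul_nonsing_inv S (isUnit_iff_ne_zero.mpr (ne_of_gt hS.det_pos))
  -- z = S * y
  have hzy : z = S.mulVec y := by
    rw [hz, hy, Matrix.mulVec_mulVec, ← Matrix.mul_assoc, ← Matrix.mul_assoc, hSinv, Matrix.one_mul]
  have h1 := hVIbar ustar hustar
  have h2 := hVIstar ubar hubar
  -- key: d ⬝ᵥ Ht.mulVec d ≤ z ⬝ᵥ d
  have key : d ⬝ᵥ Ht.mulVec d ≤ z ⬝ᵥ d := by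
    have he : ustar - ubar = -d := by rw [hd]; abel
    have he2 : ubar - ustar = d := rfl
    rw [he] at h1
    rw [he2] at h2
    have hub : Ht.mulVec ubar = Ht.mulVec d + Ht.mulVec ustar := by
      rw [hd, Matrix.mulVec_sub]; abel
    have hzeq : z = H.mulVec ustar + (Gᵀ * Q).mulVec (w - r)
        - (Ht.mulVec ustar + (Mᵀ * Q).mulVec (w - r)) := by
      rw [hz, hH, hHt]
      have : G.mulVec ustar + w - r = G.mulVec ustar + (w - r) := by abel
      rw [this, Matrix.mulVec_add, Matrix.mulVec_mulVec]
      simp [Matrix.transpose_sub, Matrix.sub_mul, Matrix.sub_mulVec, Matrix.add_mulVec,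
        Matrix.mul_assoc]
      abel
    have hd2 : d ⬝ᵥ Ht.mulVec d = Ht.mulVec d ⬝ᵥ d := dotProduct_comm _ _
    rw [hd2, hzeq]
    have := add_nonneg h1 h2
    simp only [dotProduct_neg, add_dotProduct, sub_dotProduct,
      neg_dotProduct, hub] at this ⊢
    linarith
  -- weighted norm as euclidean norm of S d
  have hwd : enorm' (S.mulVec d) = wnorm W d := by
    unfold enorm' wnorm
    congr 1
    rw [Matrix.dotProduct_mulVec, ← Matrix.mulVec_transpose, hSt, Matrix.mulVec_mulVec, hSsq,
      dotProduct_comm]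
  -- z ⬝ᵥ d = y ⬝ᵥ S d
  have hzd : z ⬝ᵥ d = y ⬝ᵥ S.mulVec d := by
    rw [hzy, dotProduct_comm, Matrix.dotProduct_mulVec, ← Matrix.mulVec_transpose, hSt,
      dotProduct_comm]
  have hcs : z ⬝ᵥ d ≤ enorm' y * wnorm W d := by
    rw [hzd, ← hwd]; exact dot_le n y (S.mulVec d)
  have hmain : μt * (wnorm W d) ^ 2 ≤ enorm' y * wnorm W d :=
    le_trans (le_trans (hmono d) key) hcs
  have hN : 0 ≤ wnorm W d := Real.sqrt_nonneg _
  have hy0 : 0 ≤ enorm' y := Real.sqrt_nonneg _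
  rcases eq_or_lt_of_le hN with h0 | h0
  · rw [← h0]
    positivity
  · have hc : μt * wnorm W d ≤ enorm' y :=
      le_of_mul_le_mul_right (by nlinarith) h0
    rw [one_div, ← div_eq_inv_mul, le_div_iff₀ hμ]
    linarith
end
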